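/- arXiv:1602.00732 — 4 statements merged into one kernel-verified Lean document; each statement's English description precedes it below -/
import Mathlib

section
/- The map (m, A) ↦ φ_m(A) is continuous on the set {(m, A) ∈ ℝ² : m ≥ 0, A ≥ 16π m²}. -/
/-- Area of the coordinate sphere of radius `r` in the Schwarzschild manifold of
mass `m`, in isotropic coordinates: `A_m(r) = 4π r² (1 + m/(2r))⁴`. -/
noncomputable def schwA (m r : ℝ) : ℝ := 4 * Real.pi * r ^ 2 * (1 + m / (2 * r)) ^ 4

/-- Volume enclosed between the horizon `r = m/2` and the coordinate sphere of radius `r`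
in the Schwarzschild manifold of mass `m`:
`V_m(r) = ∫_{m/2}^r 4π ρ² (1 + m/(2ρ))⁶ dρ`. -/
noncomputable def schwV (m r : ℝ) : ℝ :=
  ∫ ρ in (m / 2)..r, 4 * Real.pi * ρ ^ 2 * (1 + m / (2 * ρ)) ^ 6

/-- The Schwarzschild isoperimetric profile of mass `m`: `φ_m = V_m ∘ A_m⁻¹`, where
`A_m⁻¹ : [16πm², ∞) → [m/2, ∞)` is the inverse of the (bijective, strictly increasing)
area function `A_m : [m/2, ∞) → [16πm², ∞)`. -/
noncomputable def schwPhi (m A : ℝ) : ℝ :=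
  schwV m (Function.invFunOn (schwA m) (Set.Ici (m / 2)) A)

/-!
Since `A_m(r) = 4π ((r + m/2)² / r)²`, the equation `A_m(r) = 4πs²` with `s ≥ 0` is the
quadratic `(r + m/2)² = s r`, whose larger root `(s - m + √(s(s - 2m)))/2` is `A_m⁻¹(4πs²)` and
depends continuously on `(m, s)`. The density `4πρ²(1 + m/(2ρ))⁶ = 64π (ρ + m/2)⁶ / (2ρ)⁴` is
at most `256πρ²` on `ρ ≥ m/2 ≥ 0`; clamping `ρ` to that region therefore gives a function that is
continuous on all of `ℝ²`, even at the degenerate point `(0, 0)`, so `V_m(r)` is jointly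
continuous in `(m, r)`.
-/

open Real Set Filter Topology

theorem Continuous.pow_div_pow_of_abs_le {X : Type*} [TopologicalSpace X] {f g : X → ℝ}
    (hf : Continuous f) (hg : Continuous g) (hfg : ∀ x, |f x| ≤ g x) {k n : ℕ} (hnk : n < k) :
    Continuous fun x => f x ^ k / g x ^ n := by
  have hg0 : ∀ x, 0 ≤ g x := fun x => (abs_nonneg _).trans (hfg x)
  have bound : ∀ x, ‖f x ^ k / g x ^ n‖ ≤ g x ^ (k - n) := by
    intro x
    rcases (hg0 x).eq_or_lt with hx | hx
    · have hfx : f x = 0 := abs_nonpos_iff.1 (hx ▸ hfg x)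
      simp [hfx, ← hx, (Nat.zero_le n).trans_lt hnk |>.ne', Nat.sub_ne_zero_of_lt hnk]
    · rw [norm_div, norm_pow, norm_pow, Real.norm_eq_abs, Real.norm_eq_abs, abs_of_pos hx,
        pow_sub₀ _ hx.ne' hnk.le, ← div_eq_mul_inv]
      gcongr
      exact hfg x
  refine continuous_iff_continuousAt.2 fun x₀ => ?_
  rcases (hg0 x₀).eq_or_lt with hx₀ | hx₀
  · have hf₀ : f x₀ = 0 := abs_nonpos_iff.1 (hx₀ ▸ hfg x₀)
    have hlim : Tendsto (fun x => g x ^ (k - n)) (𝓝 x₀) (𝓝 0) := by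
      have := (hg.tendsto x₀).pow (k - n)
      rwa [← hx₀, zero_pow (Nat.sub_ne_zero_of_lt hnk)] at this
    simpa [ContinuousAt, hf₀, (Nat.zero_le n).trans_lt hnk |>.ne'] using
      squeeze_zero_norm bound hlim
  · exact (hf.pow k).continuousAt.div (hg.pow n).continuousAt (pow_ne_zero _ hx₀.ne')

theorem continuous_intervalIntegral_of_continuous {E X : Type*} [NormedAddCommGroup E]
    [NormedSpace ℝ E] [TopologicalSpace X] {μ : MeasureTheory.Measure ℝ}
    [MeasureTheory.NullSingletonClass μ] [MeasureTheory.IsLocallyFiniteMeasure μ]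
    {f : X → ℝ → E} (hf : Continuous (Function.uncurry f)) {a b : X → ℝ}
    (ha : Continuous a) (hb : Continuous b) :
    Continuous fun x => ∫ t in a x..b x, f x t ∂μ := by
  have hsplit : ∀ x, ∫ t in a x..b x, f x t ∂μ =
      (∫ t in (0 : ℝ)..b x, f x t ∂μ) - ∫ t in (0 : ℝ)..a x, f x t ∂μ := fun x =>
    (intervalIntegral.integral_interval_sub_left ((hf.uncurry_left x).intervalIntegrable _ _)
      ((hf.uncurry_left x).intervalIntegrable _ _)).symm
  simp_rw [hsplit]
  exact (intervalIntegral.continuous_parametric_intervalIntegral_of_continuous hf hb).sub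
    (intervalIntegral.continuous_parametric_intervalIntegral_of_continuous hf ha)

noncomputable def schwDensity (m ρ : ℝ) : ℝ := 4 * π * ρ ^ 2 * (1 + m / (2 * ρ)) ^ 6

theorem schwDensity_eq (m ρ : ℝ) : schwDensity m ρ = 64 * π * ((ρ + m / 2) ^ 6 / (2 * ρ) ^ 4) := by
  rcases eq_or_ne ρ 0 with rfl | hρ
  · simp [schwDensity]
  · unfold schwDensity
    field_simp
    ring

theorem continuous_schwDensity_max :
    Continuous fun p : ℝ × ℝ => schwDensity p.1 (max p.2 (|p.1| / 2)) := by
  simp_rw [schwDensity_eq]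
  refine continuous_const.mul (Continuous.pow_div_pow_of_abs_le (by fun_prop) (by fun_prop)
    (fun p => abs_le.2 ⟨?_, ?_⟩) (by norm_num)) <;>
  linarith [le_max_right p.2 (|p.1| / 2), neg_abs_le p.1, le_abs_self p.1]

theorem continuousOn_schwV :
    ContinuousOn (fun p : ℝ × ℝ => schwV p.1 p.2) {p | 0 ≤ p.1 ∧ p.1 / 2 ≤ p.2} := by
  refine (continuous_intervalIntegral_of_continuous
    (f := fun (p : ℝ × ℝ) ρ => schwDensity p.1 (max ρ (|p.1| / 2)))
    (continuous_schwDensity_max.comp (continuous_fst.fst.prodMk continuous_snd))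
    (continuous_fst.div_const 2) continuous_snd).continuousOn.congr fun p hp =>
      intervalIntegral.integral_congr fun ρ hρ => ?_
  rw [uIcc_of_le hp.2] at hρ
  simp [schwDensity, abs_of_nonneg hp.1, max_eq_left hρ.1]

theorem schwA_eq (m r : ℝ) : schwA m r = 4 * π * ((r + m / 2) ^ 2 / r) ^ 2 := by
  rcases eq_or_ne r 0 with rfl | hr
  · simp [schwA]
  · unfold schwA
    field_simp

theorem schwA_strictMonoOn {m : ℝ} (hm : 0 ≤ m) : StrictMonoOn (schwA m) (Ici (m / 2)) := by
  intro a (ha : m / 2 ≤ a) b (hb : m / 2 ≤ b) hab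
  have ha0 : 0 ≤ a := by linarith
  have hb0 : 0 < b := by linarith
  have hlt : (a + m / 2) ^ 2 / a < (b + m / 2) ^ 2 / b := by
    rcases ha0.eq_or_lt with rfl | ha0
    · obtain rfl : m = 0 := by linarith
      simpa [sq, hb0.ne'] using hb0
    · have hprod : (m / 2) ^ 2 < a * b := by
        nlinarith [mul_pos ha0 (by linarith : 0 < b - m / 2),
          mul_nonneg (by linarith : 0 ≤ m / 2) (by linarith : 0 ≤ a - m / 2)]
      rw [div_lt_div_iff₀ ha0 hb0]
      nlinarith [mul_pos (sub_pos.2 hab) (sub_pos.2 hprod)]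
  rw [schwA_eq, schwA_eq]
  gcongr

noncomputable def schwRadius (m s : ℝ) : ℝ := (s - m + √(s * (s - 2 * m))) / 2

theorem le_schwRadius {m s : ℝ} (h : 2 * m ≤ s) : m / 2 ≤ schwRadius m s := by
  unfold schwRadius
  linarith [sqrt_nonneg (s * (s - 2 * m))]

theorem schwA_schwRadius {m s : ℝ} (hm : 0 ≤ m) (h : 2 * m ≤ s) :
    schwA m (schwRadius m s) = 4 * π * s ^ 2 := by
  have hD : √(s * (s - 2 * m)) ^ 2 = s * (s - 2 * m) := sq_sqrt (by nlinarith)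
  have hroot : (schwRadius m s + m / 2) ^ 2 = s * schwRadius m s := by
    unfold schwRadius
    linear_combination hD / 4
  have hr : s / 4 ≤ schwRadius m s := by
    unfold schwRadius
    linarith [sqrt_nonneg (s * (s - 2 * m))]
  rw [schwA_eq, hroot]
  rcases (show 0 ≤ s by linarith).eq_or_lt with rfl | hs
  · simp
  · rw [mul_div_cancel_right₀ _ (by linarith : schwRadius m s ≠ 0)]

theorem two_mul_le_sqrt_div_four_pi {m A : ℝ} (hm : 0 ≤ m) (hA : 16 * π * m ^ 2 ≤ A) :
    2 * m ≤ √(A / (4 * π)) := by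
  rw [le_sqrt (by linarith) (div_nonneg (by nlinarith [pi_pos]) (by positivity)),
    le_div_iff₀ (by positivity)]
  linarith

theorem invFunOn_schwA {m A : ℝ} (hm : 0 ≤ m) (hA : 16 * π * m ^ 2 ≤ A) :
    Function.invFunOn (schwA m) (Ici (m / 2)) A = schwRadius m √(A / (4 * π)) := by
  have hs := two_mul_le_sqrt_div_four_pi hm hA
  have h := (schwA_strictMonoOn hm).injOn.leftInvOn_invFunOn (le_schwRadius hs)
  rwa [schwA_schwRadius hm hs, sq_sqrt (div_nonneg (by nlinarith [pi_pos]) (by positivity)),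
    mul_div_cancel₀ _ (by positivity)] at h

/-- `(m, A) ↦ φ_m(A)` is continuous on `{(m, A) : m ≥ 0, A ≥ 16πm²}`. -/
theorem schwPhi_continuousOn :
    ContinuousOn (fun p : ℝ × ℝ => schwPhi p.1 p.2)
      {p : ℝ × ℝ | 0 ≤ p.1 ∧ 16 * Real.pi * p.1 ^ 2 ≤ p.2} := by
  have hR : Continuous fun p : ℝ × ℝ => (p.1, schwRadius p.1 √(p.2 / (4 * π))) := by
    unfold schwRadius
    fun_prop
  refine (continuousOn_schwV.comp hR.continuousOn fun p hp =>
    ⟨hp.1, le_schwRadius (two_mul_le_sqrt_div_four_pi hp.1 hp.2)⟩).congr fun p hp => ?_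
  simp [schwPhi, invFunOn_schwA hp.1 hp.2]
end

section
/- For every constant μ > 0, there exist constants C > 0 and A₀ > 16π μ² such that for all m ∈ [0, μ] and all A ≥ A₀, |(2/A)·(φ_m(A) − A^{3/2}/(6√π)) − m| ≤ C·A^{−1/2}. In other words, (2/A)(φ_m(A) − A^{3/2}/(6√π)) = m + O(A^{−1/2}), with the error estimate uniform for m ∈ [0, μ]. -/
/-!
With the conformal factor `ψ = 1 + m/(2ρ)` and the area radius `s = ρψ²` one has `A_m = 4πs²`
and `φ_0(4πs²) = 4πs³/3`. The comparison volume `W = 4πs³/3 + 2πms²` satisfies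
`(V_m - W)' = 2πm²ψ³(ψ + 2)`, which lies in `[0, 64πm²]` because `1 ≤ ψ ≤ 2` for `ρ ≥ m/2`;
together with `(V_m - W)(m/2) = -56πm³/3` this gives `|V_m(r) - W(r)| ≤ 64πm²r ≤ 64πm²s`.
Since `(2/A)(V_m - φ_0(A)) - m = (V_m - W)/(2πs²)`, the error is at most
`32m²/s = 64√π m² A^{-1/2}`.
-/

open Real Set

noncomputable def schwConformalFactor (m ρ : ℝ) : ℝ := 1 + m / (2 * ρ)

noncomputable def schwAreaRadius (m r : ℝ) : ℝ := r * schwConformalFactor m r ^ 2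

section ConformalFactor

variable {m ρ : ℝ}

lemma one_le_schwConformalFactor (hm : 0 ≤ m) (hρ : 0 ≤ ρ) : 1 ≤ schwConformalFactor m ρ :=
  le_add_of_nonneg_right (by positivity)

lemma schwConformalFactor_le_two (hm : 0 ≤ m) (hρ : m / 2 ≤ ρ) : schwConformalFactor m ρ ≤ 2 := by
  rcases hm.eq_or_lt with rfl | hm
  · simp [schwConformalFactor]
  · have : m / (2 * ρ) ≤ 1 := (div_le_one (by linarith)).2 (by linarith)
    unfold schwConformalFactor
    linarith

lemma continuousOn_schwConformalFactor (hm : 0 ≤ m) :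
    ContinuousOn (schwConformalFactor m) (Ici (m / 2)) := by
  rcases hm.eq_or_lt with rfl | hm
  · exact (continuousOn_const (c := (1 : ℝ))).congr fun x _ => by simp [schwConformalFactor]
  · refine continuousOn_const.add (continuousOn_const.div (by fun_prop) fun x hx => ?_)
    have : 0 < x := lt_of_lt_of_le (by positivity) hx
    positivity

lemma hasDerivAt_schwConformalFactor (hρ : ρ ≠ 0) :
    HasDerivAt (schwConformalFactor m) (-(m / (2 * ρ ^ 2))) ρ := by
  have hψ : schwConformalFactor m = fun x => 1 + m / 2 * x⁻¹ := by
    ext x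
    rw [schwConformalFactor]
    ring
  rw [hψ]
  exact (((hasDerivAt_inv hρ).const_mul (m / 2)).const_add 1).congr_deriv (by ring)

end ConformalFactor

section AreaRadius

variable {m r : ℝ}

lemma schwA_eq_four_pi_mul_schwAreaRadius_sq (m r : ℝ) :
    schwA m r = 4 * π * schwAreaRadius m r ^ 2 := by
  unfold schwA schwAreaRadius schwConformalFactor
  ring

lemma le_schwAreaRadius (hm : 0 ≤ m) (hr : 0 ≤ r) : r ≤ schwAreaRadius m r :=
  le_mul_of_one_le_right hr (one_le_pow₀ (one_le_schwConformalFactor hm hr))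

lemma schwAreaRadius_half (hm : 0 ≤ m) : schwAreaRadius m (m / 2) = 2 * m := by
  rcases hm.eq_or_lt with rfl | hm
  · simp [schwAreaRadius]
  · unfold schwAreaRadius schwConformalFactor
    field_simp
    ring

lemma exists_schwA_eq {A : ℝ} (hm : 0 ≤ m) (hA : 16 * π * m ^ 2 ≤ A) :
    ∃ r ∈ Ici (m / 2), schwA m r = A := by
  have hA0 : 0 ≤ A := le_trans (by positivity) hA
  set R := m / 2 + √A
  have hmR : m / 2 ≤ R := le_add_of_nonneg_right (sqrt_nonneg A)
  have hR : √A ≤ R := le_add_of_nonneg_left (by positivity)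
  have hlow : schwA m (m / 2) ≤ A := by
    rw [schwA_eq_four_pi_mul_schwAreaRadius_sq, schwAreaRadius_half hm]
    linarith
  have hhigh : A ≤ schwA m R := by
    have hRs := le_schwAreaRadius hm ((sqrt_nonneg A).trans hR)
    calc A = √A ^ 2 := (sq_sqrt hA0).symm
      _ ≤ R ^ 2 := by gcongr
      _ ≤ 4 * π * R ^ 2 := le_mul_of_one_le_left (sq_nonneg R) (by linarith [pi_gt_three])
      _ ≤ 4 * π * schwAreaRadius m R ^ 2 := by gcongr
      _ = schwA m R := (schwA_eq_four_pi_mul_schwAreaRadius_sq m R).symm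
  have hcont : ContinuousOn (schwA m) (Icc (m / 2) R) :=
    (continuousOn_const.mul (continuousOn_pow 2)).mul
      (((continuousOn_schwConformalFactor hm).mono Icc_subset_Ici_self).pow 4)
  obtain ⟨r, hr, rfl⟩ := intermediate_value_Icc hmR hcont ⟨hlow, hhigh⟩
  exact ⟨r, hr.1, rfl⟩

lemma exists_schwPhi_eq_schwV {A : ℝ} (hm : 0 ≤ m) (hA : 16 * π * m ^ 2 ≤ A) :
    ∃ r ≥ m / 2, schwA m r = A ∧ schwPhi m A = schwV m r :=
  have h := exists_schwA_eq hm hA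
  ⟨_, Function.invFunOn_mem h, Function.invFunOn_eq h, rfl⟩

end AreaRadius

noncomputable def schwVolumeApprox (m r : ℝ) : ℝ :=
  4 * π / 3 * schwAreaRadius m r ^ 3 + 2 * π * m * schwAreaRadius m r ^ 2

section Volume

variable {m r : ℝ}

lemma hasDerivAt_schwVolumeApprox {ρ : ℝ} (hρ : ρ ≠ 0) :
    HasDerivAt (schwVolumeApprox m)
      (4 * π * ρ ^ 2 * schwConformalFactor m ρ ^ 6
        - 2 * π * m ^ 2 * schwConformalFactor m ρ ^ 3 * (schwConformalFactor m ρ + 2)) ρ := by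
  have hs := (hasDerivAt_id' ρ).fun_mul ((hasDerivAt_schwConformalFactor (m := m) hρ).fun_pow 2)
  refine (((hs.fun_pow 3).const_mul (4 * π / 3)).add
    ((hs.fun_pow 2).const_mul (2 * π * m))).congr_deriv ?_
  simp only [schwConformalFactor, Nat.cast_ofNat, Nat.reduceSub, pow_one]
  field_simp
  ring

lemma schwV_eq_schwVolumeApprox_add_integral (hm : 0 ≤ m) (hr : m / 2 ≤ r) :
    schwV m r = schwVolumeApprox m r - 56 * π / 3 * m ^ 3
      + ∫ ρ in (m / 2)..r,
          2 * π * m ^ 2 * schwConformalFactor m ρ ^ 3 * (schwConformalFactor m ρ + 2) := by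
  have hψ : ContinuousOn (schwConformalFactor m) (Icc (m / 2) r) :=
    (continuousOn_schwConformalFactor hm).mono Icc_subset_Ici_self
  have hs : ContinuousOn (schwAreaRadius m) (Icc (m / 2) r) := continuousOn_id.mul (hψ.pow 2)
  have hV : IntervalIntegrable (fun ρ => 4 * π * ρ ^ 2 * schwConformalFactor m ρ ^ 6)
      MeasureTheory.volume (m / 2) r :=
    ContinuousOn.intervalIntegrable_of_Icc hr (by fun_prop)
  have hW : IntervalIntegrable
      (fun ρ => 2 * π * m ^ 2 * schwConformalFactor m ρ ^ 3 * (schwConformalFactor m ρ + 2))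
      MeasureTheory.volume (m / 2) r :=
    ContinuousOn.intervalIntegrable_of_Icc hr (by fun_prop)
  have hftc := intervalIntegral.integral_eq_sub_of_hasDerivAt_of_le hr
    (by unfold schwVolumeApprox; fun_prop)
    (fun ρ hρ => hasDerivAt_schwVolumeApprox (lt_of_le_of_lt (by positivity) hρ.1).ne')
    (hV.sub hW)
  rw [intervalIntegral.integral_sub hV hW] at hftc
  have hG : schwVolumeApprox m (m / 2) = 56 * π / 3 * m ^ 3 := by
    rw [schwVolumeApprox, schwAreaRadius_half hm]
    ring
  rw [schwV]
  simp only [schwConformalFactor, hG] at hftc ⊢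
  linarith

lemma abs_schwV_sub_schwVolumeApprox_le (hm : 0 ≤ m) (hr : m / 2 ≤ r) :
    |schwV m r - schwVolumeApprox m r| ≤ 64 * π * m ^ 2 * r := by
  have hI : ‖∫ ρ in (m / 2)..r,
      2 * π * m ^ 2 * schwConformalFactor m ρ ^ 3 * (schwConformalFactor m ρ + 2)‖
        ≤ 64 * π * m ^ 2 * |r - m / 2| := by
    refine intervalIntegral.norm_integral_le_of_norm_le_const fun ρ hρ => ?_
    rw [uIoc_of_le hr] at hρ
    have h1 := one_le_schwConformalFactor hm (by linarith [hρ.1] : 0 ≤ ρ)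
    have h2 := schwConformalFactor_le_two hm hρ.1.le
    rw [Real.norm_eq_abs, abs_of_nonneg (by positivity)]
    have : schwConformalFactor m ρ ^ 3 * (schwConformalFactor m ρ + 2) ≤ 2 ^ 3 * (2 + 2) := by
      gcongr
    have := mul_le_mul_of_nonneg_left this (by positivity : (0 : ℝ) ≤ 2 * π * m ^ 2)
    linarith
  rw [Real.norm_eq_abs, abs_of_nonneg (by linarith : 0 ≤ r - m / 2), abs_le] at hI
  have hm3 : 0 ≤ 56 * π / 3 * m ^ 3 := by positivity
  have hm3' : 56 * π / 3 * m ^ 3 ≤ 64 * π * m ^ 2 * (m / 2) := by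
    have : 0 ≤ π * m ^ 3 := by positivity
    linarith
  rw [schwV_eq_schwVolumeApprox_add_integral hm hr, abs_le]
  constructor <;> linarith

end Volume

section Profile

variable {s : ℝ}

lemma four_pi_mul_sq_eq_sq (s : ℝ) : 4 * π * s ^ 2 = (2 * √π * s) ^ 2 := by
  rw [mul_pow, mul_pow, sq_sqrt pi_pos.le]
  ring

lemma four_pi_mul_sq_rpow_three_halves (hs : 0 ≤ s) :
    (4 * π * s ^ 2) ^ ((3 : ℝ) / 2) / (6 * √π) = 4 * π / 3 * s ^ 3 := by
  rw [four_pi_mul_sq_eq_sq, ← rpow_natCast_mul (by positivity),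
    show ((2 : ℕ) : ℝ) * (3 / 2) = (3 : ℕ) by norm_num, rpow_natCast, mul_pow, mul_pow,
    pow_succ √π 2, sq_sqrt pi_pos.le]
  field_simp
  ring

lemma four_pi_mul_sq_rpow_neg_half (hs : 0 ≤ s) :
    (4 * π * s ^ 2) ^ (-(1 : ℝ) / 2) = (2 * √π * s)⁻¹ := by
  rw [four_pi_mul_sq_eq_sq, ← rpow_natCast_mul (by positivity),
    show ((2 : ℕ) : ℝ) * (-1 / 2) = -1 by norm_num, rpow_neg_one]

end Profile

lemma abs_two_div_schwA_mul_sub_sub_le {m r : ℝ} (hm : 0 ≤ m) (hr : m / 2 ≤ r)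
    (hA : 0 < schwA m r) :
    |2 / schwA m r * (schwV m r - schwA m r ^ ((3 : ℝ) / 2) / (6 * √π)) - m|
      ≤ 64 * √π * m ^ 2 * schwA m r ^ (-(1 : ℝ) / 2) := by
  have hr0 : 0 ≤ r := le_trans (by positivity) hr
  rw [schwA_eq_four_pi_mul_schwAreaRadius_sq] at hA ⊢
  set s := schwAreaRadius m r
  have hs0 : 0 ≤ s := mul_nonneg hr0 (sq_nonneg _)
  have hs : 0 < s := hs0.lt_of_ne fun h => by simp [← h] at hA
  have hrs : r ≤ s := le_schwAreaRadius hm hr0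
  have hexp : 2 / (4 * π * s ^ 2) * (schwV m r - 4 * π / 3 * s ^ 3) - m
      = (schwV m r - schwVolumeApprox m r) / (2 * π * s ^ 2) := by
    rw [schwVolumeApprox]
    field_simp
    ring
  rw [four_pi_mul_sq_rpow_three_halves hs0, four_pi_mul_sq_rpow_neg_half hs0, hexp, abs_div,
    abs_of_pos (by positivity : 0 < 2 * π * s ^ 2)]
  calc |schwV m r - schwVolumeApprox m r| / (2 * π * s ^ 2)
      ≤ 64 * π * m ^ 2 * s / (2 * π * s ^ 2) := by
        gcongr
        exact (abs_schwV_sub_schwVolumeApprox_le hm hr).trans (by gcongr)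
    _ = 64 * √π * m ^ 2 * (2 * √π * s)⁻¹ := by
        field_simp

/-- `(2/A)(φ_m(A) − A^{3/2}/(6√π)) = m + O(A^{−1/2})`, uniformly for
`m ∈ [0, μ]`. -/
theorem schwPhi_mass_expansion_uniform (μ : ℝ) (hμ : 0 < μ) :
    ∃ C > (0 : ℝ), ∃ A₀ > 16 * Real.pi * μ ^ 2, ∀ m ∈ Set.Icc (0 : ℝ) μ, ∀ A ≥ A₀,
      |2 / A * (schwPhi m A - A ^ ((3 : ℝ) / 2) / (6 * Real.sqrt Real.pi)) - m|
        ≤ C * A ^ (-(1 : ℝ) / 2) := by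
  refine ⟨64 * √π * μ ^ 2, by positivity, 16 * π * μ ^ 2 + 1, by linarith, ?_⟩
  rintro m ⟨hm, hmμ⟩ A hA
  have hmμ2 : 16 * π * m ^ 2 ≤ 16 * π * μ ^ 2 := by gcongr
  obtain ⟨r, hr, rfl, hφ⟩ := exists_schwPhi_eq_schwV hm (by linarith : 16 * π * m ^ 2 ≤ A)
  rw [hφ]
  have hA0 : 0 < schwA m r := lt_of_lt_of_le (by positivity) hA
  refine (abs_two_div_schwA_mul_sub_sub_le hm hr hA0).trans ?_
  exact mul_le_mul_of_nonneg_right (by gcongr) (rpow_nonneg hA0.le _)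
end

section
/- For each fixed m ≥ 0, the limit as A → ∞ of (2/A)·(φ_m(A) − A^{3/2}/(6√π)) equals m. -/
open Real Filter Set intervalIntegral Topology

theorem MonotoneOn.tendsto_atTop_of_rightInverse {α β : Type*} [LinearOrder α] [Preorder β]
    [NoMaxOrder β] {f : α → β} {g : β → α} {a : α} (hf : MonotoneOn f (Ici a))
    (hg : ∀ᶠ y in atTop, g y ∈ Ici a ∧ f (g y) = y) : Tendsto g atTop atTop := by
  refine tendsto_atTop.2 fun b => ?_
  have hb : max b a ∈ Ici a := le_max_right b a
  filter_upwards [hg, eventually_gt_atTop (f (max b a))] with y ⟨hgy, hfgy⟩ hy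
  by_contra! hlt
  have : y ≤ f (max b a) := hfgy ▸ hf hgy hb (hlt.le.trans (le_max_left b a))
  exact this.not_gt hy

lemma euclidean_profile_of_area {s : ℝ} (hs : 0 ≤ s) :
    (4 * π * s ^ 2) ^ ((3 : ℝ) / 2) / (6 * √π) = 4 * π * s ^ 3 / 3 := by
  have hsq : 4 * π * s ^ 2 = (2 * √π * s) ^ 2 := by
    rw [mul_pow, mul_pow, sq_sqrt pi_pos.le]; ring
  have hpow : ((2 * √π * s) ^ 2) ^ ((3 : ℝ) / 2) = (2 * √π * s) ^ 3 := by
    rw [← rpow_natCast, ← rpow_mul (by positivity)]; norm_num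
  have hπ : √π ^ 3 = π * √π := by rw [pow_succ, sq_sqrt pi_pos.le]
  have hπ0 : √π ≠ 0 := (sqrt_pos.2 pi_pos).ne'
  rw [hsq, hpow, mul_pow, mul_pow, hπ]
  field_simp
  ring

lemma continuousOn_mul_sq_mul_one_add_div_pow {m : ℝ} (hm : 0 ≤ m) (c : ℝ) (n : ℕ) :
    ContinuousOn (fun ρ : ℝ => c * ρ ^ 2 * (1 + m / (2 * ρ)) ^ n) (Ici (m / 2)) := by
  rcases hm.eq_or_lt with rfl | hm
  · simp only [zero_div, add_zero, one_pow, mul_one]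
    fun_prop
  · refine ContinuousOn.mul (by fun_prop) (ContinuousOn.pow (continuousOn_const.add
      (continuousOn_const.div (by fun_prop) fun ρ hρ => ?_)) n)
    have : 0 < ρ := (half_pos hm).trans_le hρ
    positivity

lemma tendsto_one_add_div_pow (m : ℝ) (n : ℕ) :
    Tendsto (fun r : ℝ => (1 + m / (2 * r)) ^ n) atTop (𝓝 1) := by
  have h : Tendsto (fun r : ℝ => m / (2 * r)) atTop (𝓝 0) :=
    tendsto_const_nhds.div_atTop (tendsto_id.const_mul_atTop two_pos)
  simpa using ((tendsto_const_nhds (x := (1 : ℝ))).add h).pow n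

section

variable {m r : ℝ}

lemma continuousOn_schwA (hm : 0 ≤ m) : ContinuousOn (schwA m) (Ici (m / 2)) :=
  continuousOn_mul_sq_mul_one_add_div_pow hm (4 * π) 4

lemma tendsto_schwA_atTop (m : ℝ) : Tendsto (schwA m) atTop atTop :=
  ((tendsto_pow_atTop two_ne_zero).const_mul_atTop (by positivity)).atTop_mul_pos one_pos
    (tendsto_one_add_div_pow m 4)

noncomputable def schwArealRadius (m r : ℝ) : ℝ := (r + m / 2) ^ 2 / r

lemma schwA_eq_arealRadius (hr : r ≠ 0) : schwA m r = 4 * π * schwArealRadius m r ^ 2 := by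
  unfold schwA schwArealRadius
  field_simp

lemma schwA_monotoneOn (hm : 0 ≤ m) : MonotoneOn (schwA m) (Ici (m / 2)) := by
  intro x hx y hy hxy
  simp only [mem_Ici] at hx hy
  rcases (show 0 ≤ x by linarith).eq_or_lt with rfl | hx0
  · simp only [schwA, zero_pow two_ne_zero, mul_zero, zero_mul]
    positivity
  have hy0 : 0 < y := hx0.trans_le hxy
  rw [schwA_eq_arealRadius hx0.ne', schwA_eq_arealRadius hy0.ne']
  have : schwArealRadius m x ≤ schwArealRadius m y := by
    rw [schwArealRadius, schwArealRadius, div_le_div_iff₀ hx0 hy0]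
    nlinarith [mul_le_mul hx hy (by linarith) hx0.le, sub_nonneg.2 hxy]
  gcongr
  exact div_nonneg (sq_nonneg _) hx0.le

/-- Up to an additive constant, `4πm · excessPrimitive (m / 2) r` is `V_m(r) - 4π s³/3`, the
excess of `V_m` over the Euclidean volume enclosed by a sphere of the same area `4π s²`
(`s = schwArealRadius m r`). -/
noncomputable def excessPrimitive (a ρ : ℝ) : ℝ :=
  ρ ^ 2 / 2 + 5 * a * ρ + 10 * a ^ 2 * log ρ - 10 * a ^ 3 / ρ - 5 * a ^ 4 / (2 * ρ ^ 2)
    - a ^ 5 / (3 * ρ ^ 3)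

lemma hasDerivAt_excessPrimitive (a : ℝ) {ρ : ℝ} (hρ : ρ ≠ 0) :
    HasDerivAt (excessPrimitive a) (ρ * (1 + a / ρ) ^ 5) ρ := by
  have h1 := (hasDerivAt_pow 2 ρ).div_const 2
  have h2 := (hasDerivAt_id ρ).const_mul (5 * a)
  have h3 := (hasDerivAt_log hρ).const_mul (10 * a ^ 2)
  have h4 := (hasDerivAt_inv hρ).const_mul (10 * a ^ 3)
  have h5 := ((hasDerivAt_pow 2 ρ).inv (pow_ne_zero 2 hρ)).const_mul (5 * a ^ 4 / 2)
  have h6 := ((hasDerivAt_pow 3 ρ).inv (pow_ne_zero 3 hρ)).const_mul (a ^ 5 / 3)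
  refine ((((((h1.add h2).add h3).sub h4).sub h5).sub h6).congr_of_eventuallyEq
    (Eventually.of_forall fun x => ?_)).congr_deriv ?_
  · simp only [excessPrimitive, Pi.add_apply, Pi.sub_apply, Pi.inv_apply, id]
    ring
  · field_simp
    ring

lemma tendsto_excessPrimitive_div_sq (a : ℝ) :
    Tendsto (fun r => excessPrimitive a r / r ^ 2) atTop (𝓝 (1 / 2)) := by
  have hx : Tendsto (fun r : ℝ => r⁻¹) atTop (𝓝 0) := tendsto_inv_atTop_zero
  have hy : Tendsto (fun r : ℝ => log r / r) atTop (𝓝 0) :=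
    isLittleO_log_id_atTop.tendsto_div_nhds_zero
  have h := (((((tendsto_const_nhds (x := (1 : ℝ) / 2)).add (hx.const_mul (5 * a))).add
    ((hy.mul hx).const_mul (10 * a ^ 2))).sub ((hx.pow 3).const_mul (10 * a ^ 3))).sub
    ((hx.pow 4).const_mul (5 * a ^ 4 / 2))).sub ((hx.pow 5).const_mul (a ^ 5 / 3))
  simp only [ne_eq, OfNat.ofNat_ne_zero, not_false_eq_true, zero_pow, mul_zero, add_zero,
    sub_zero] at h
  refine h.congr' ?_
  filter_upwards [eventually_ne_atTop 0] with r hr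
  simp only [excessPrimitive]
  field_simp

noncomputable def schwVPrimitive (m ρ : ℝ) : ℝ :=
  4 * π * schwArealRadius m ρ ^ 3 / 3 + 4 * π * m * excessPrimitive (m / 2) ρ

lemma hasDerivAt_schwVPrimitive (m : ℝ) {ρ : ℝ} (hρ : 0 < ρ) :
    HasDerivAt (schwVPrimitive m) (4 * π * ρ ^ 2 * (1 + m / (2 * ρ)) ^ 6) ρ := by
  have hR : HasDerivAt (schwArealRadius m)
      ((2 * (ρ + m / 2) * ρ - (ρ + m / 2) ^ 2) / ρ ^ 2) ρ :=
    ((((hasDerivAt_id' ρ).add_const (m / 2)).pow 2).div (hasDerivAt_id' ρ) hρ.ne').congr_deriv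
      (by norm_num)
  refine ((((hR.pow 3).const_mul (4 * π)).div_const 3).add
    ((hasDerivAt_excessPrimitive (m / 2) hρ.ne').const_mul (4 * π * m))).congr_deriv ?_
  simp only [schwArealRadius, Nat.add_one_sub_one, Nat.cast_ofNat]
  have := hρ.ne'
  field_simp
  ring

lemma schwV_eq_schwV_add_primitive_sub (hm : 0 ≤ m) {r₀ : ℝ} (h₀ : 0 < r₀) (hr₀ : m / 2 ≤ r₀)
    (hr : r₀ ≤ r) :
    schwV m r = schwV m r₀ + (schwVPrimitive m r - schwVPrimitive m r₀) := by
  have hint : ∀ b ≥ m / 2, IntervalIntegrable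
      (fun ρ : ℝ => 4 * π * ρ ^ 2 * (1 + m / (2 * ρ)) ^ 6) MeasureTheory.volume (m / 2) b :=
    fun b hb => ((continuousOn_mul_sq_mul_one_add_div_pow hm (4 * π) 6).mono
      (by rw [uIcc_of_le hb]; exact Icc_subset_Ici_self)).intervalIntegrable
  rw [schwV, schwV, ← integral_add_adjacent_intervals (hint r₀ hr₀)
    ((hint r₀ hr₀).symm.trans (hint r (hr₀.trans hr)))]
  congr 1
  refine integral_eq_sub_of_hasDerivAt (fun ρ hρ => hasDerivAt_schwVPrimitive m ?_)
    ((hint r₀ hr₀).symm.trans (hint r (hr₀.trans hr)))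
  rw [uIcc_of_le hr] at hρ
  exact h₀.trans_le hρ.1

theorem tendsto_volume_excess_div_schwA (hm : 0 ≤ m) :
    Tendsto (fun r => 2 / schwA m r * (schwV m r - schwA m r ^ ((3 : ℝ) / 2) / (6 * √π)))
      atTop (𝓝 m) := by
  set C := schwV m (m / 2 + 1) - schwVPrimitive m (m / 2 + 1)
  have hlim := ((((tendsto_const_nhds (x := C)).div_atTop (tendsto_pow_atTop two_ne_zero)).add
    ((tendsto_excessPrimitive_div_sq (m / 2)).const_mul (4 * π * m))).const_mul 2).div
    ((tendsto_one_add_div_pow m 4).const_mul (4 * π)) (by positivity)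
  convert hlim.congr' ?_ using 2
  · field_simp
    ring
  filter_upwards [eventually_ge_atTop (m / 2 + 1)] with r hr
  have hr0 : 0 < r := by linarith
  rw [schwV_eq_schwV_add_primitive_sub hm (by positivity) (by linarith) hr,
    schwA_eq_arealRadius hr0.ne',
    euclidean_profile_of_area (s := schwArealRadius m r) (div_nonneg (sq_nonneg _) hr0.le)]
  simp only [Pi.div_apply, schwVPrimitive, schwArealRadius, C]
  have : r + m / 2 ≠ 0 := by linarith
  field_simp
  ring

end

/-- For fixed `m ≥ 0`, `(2/A)(φ_m(A) − A^{3/2}/(6√π)) → m` as `A → ∞`. -/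
theorem schwPhi_mass_limit (m : ℝ) (hm : 0 ≤ m) :
    Filter.Tendsto
      (fun A : ℝ => 2 / A * (schwPhi m A - A ^ ((3 : ℝ) / 2) / (6 * Real.sqrt Real.pi)))
      Filter.atTop (nhds m) := by
  set g := Function.invFunOn (schwA m) (Ici (m / 2))
  have hg : ∀ᶠ A in atTop, g A ∈ Ici (m / 2) ∧ schwA m (g A) = A := by
    filter_upwards [eventually_ge_atTop (schwA m (m / 2))] with A hA
    have hA' := intermediate_value_Ici (continuousOn_schwA hm) (tendsto_schwA_atTop m) hA
    exact ⟨Function.invFunOn_mem hA', Function.invFunOn_eq hA'⟩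
  refine ((tendsto_volume_excess_div_schwA hm).comp
    ((schwA_monotoneOn hm).tendsto_atTop_of_rightInverse hg)).congr' ?_
  filter_upwards [hg] with A hA
  simp only [Function.comp_apply, hA.2]
  rfl
end

section
/- Let m > 0. The second derivative of the Schwarzschild isoperimetric profile satisfies: φ_m″(A) < 0 for 16π m² < A < 36π m², φ_m″(A) = 0 for A = 36π m², and φ_m″(A) > 0 for A > 36π m². -/
/-!
Write `A = 4πs²`, so `s = √(A/4π)` is the area radius. Since `A_m(r) = 4π ((r + m/2)²/r)²`,
inverting `A_m` amounts to solving the quadratic `(r + m/2)² = s r`, whose larger root satisfies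
`r > m/2` as soon as `s > 2m`; it then also satisfies `(r - m/2)² = r (s - 2m)`. By the chain
rule `φ_m' = V_m'/A_m'` at this root, and the two identities turn this into
`φ_m'(A)² = s³/(4(s - 2m))`. As `d/ds (s³/(s - 2m)) = 2s²(s - 3m)/(s - 2m)²` and `s` increases
with `A`, `φ_m''(A)` has the sign of `s - 3m`, which vanishes exactly at `A = 36πm²`.
-/

namespace Schwarzschild

open Real Set Filter Topology

noncomputable def areaRadius (A : ℝ) : ℝ := √(A / (4 * π))

theorem continuous_areaRadius : Continuous areaRadius := by
  unfold areaRadius; fun_prop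

theorem eventually_lt_areaRadius {c A : ℝ} (hA : c < areaRadius A) :
    ∀ᶠ B in 𝓝 A, c < areaRadius B :=
  (continuous_areaRadius.tendsto A).eventually_const_lt hA

theorem areaRadius_four_pi_mul_sq {c : ℝ} (hc : 0 ≤ c) : areaRadius (4 * π * c ^ 2) = c := by
  rw [areaRadius, mul_div_cancel_left₀ _ (by positivity), sqrt_sq hc]

theorem lt_areaRadius_iff {c A : ℝ} (hc : 0 ≤ c) : c < areaRadius A ↔ 4 * π * c ^ 2 < A := by
  rw [areaRadius, lt_sqrt hc, lt_div_iff₀ (by positivity), mul_comm]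

theorem areaRadius_lt_iff {c A : ℝ} (hc : 0 < c) : areaRadius A < c ↔ A < 4 * π * c ^ 2 := by
  rw [areaRadius, sqrt_lt' hc, div_lt_iff₀ (by positivity), mul_comm]

theorem four_pi_mul_areaRadius_sq {A : ℝ} (hA : 0 ≤ A) : 4 * π * areaRadius A ^ 2 = A := by
  rw [areaRadius, sq_sqrt (by positivity)]
  field_simp

theorem hasDerivAt_areaRadius {A : ℝ} (hA : 0 < A) :
    HasDerivAt areaRadius (8 * π * areaRadius A)⁻¹ A := by
  refine ((hasDerivAt_id' A).div_const (4 * π)).sqrt (by positivity) |>.congr_deriv ?_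
  rw [areaRadius]
  field_simp
  ring

/-- The larger root `r` of `(r + m/2)² = s r`, i.e. the radius with `A_m(r) = 4πs²`. -/
noncomputable def schwRadius (m s : ℝ) : ℝ := (s - m + √((s - m) ^ 2 - m ^ 2)) / 2

variable {m s : ℝ}

theorem continuous_schwRadius (m : ℝ) : Continuous (schwRadius m) := by
  unfold schwRadius; fun_prop

theorem half_lt_schwRadius (hs : 2 * m < s) : m / 2 < schwRadius m s := by
  have := sqrt_nonneg ((s - m) ^ 2 - m ^ 2)
  rw [schwRadius]; linarith

theorem schwRadius_add_half_sq (hm : 0 ≤ m) (hs : 2 * m ≤ s) :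
    (schwRadius m s + m / 2) ^ 2 = s * schwRadius m s := by
  have := sq_sqrt (show 0 ≤ (s - m) ^ 2 - m ^ 2 by nlinarith)
  rw [schwRadius]; linear_combination this / 4

theorem schwA_eq_of_ne_zero {r : ℝ} (m : ℝ) (hr : r ≠ 0) :
    schwA m r = 4 * π * ((r + m / 2) ^ 2 / r) ^ 2 := by
  rw [schwA]; field_simp

theorem schwA_schwRadius (hm : 0 ≤ m) (hs : 2 * m < s) :
    schwA m (schwRadius m s) = 4 * π * s ^ 2 := by
  have hr : schwRadius m s ≠ 0 :=
    ((by positivity : 0 ≤ m / 2).trans_lt (half_lt_schwRadius hs)).ne'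
  rw [schwA_eq_of_ne_zero m hr, schwRadius_add_half_sq hm hs.le, mul_div_cancel_right₀ _ hr]

theorem schwA_schwRadius_areaRadius {A : ℝ} (hm : 0 ≤ m) (hA : 2 * m < areaRadius A) :
    schwA m (schwRadius m (areaRadius A)) = A := by
  have h := (lt_areaRadius_iff (by positivity)).1 hA
  have hA0 : 0 ≤ A := (by positivity : 0 ≤ 4 * π * (2 * m) ^ 2).trans h.le
  rw [schwA_schwRadius hm hA, four_pi_mul_areaRadius_sq hA0]

theorem hasDerivAt_schwA {r : ℝ} (m : ℝ) (hr : r ≠ 0) :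
    HasDerivAt (schwA m) (8 * π * (1 + m / (2 * r)) ^ 3 * (r - m / 2)) r := by
  have h2r : 2 * r ≠ 0 := mul_ne_zero two_ne_zero hr
  have hu : HasDerivAt (fun x => 1 + m / (2 * x))
      (0 + (0 * (2 * r) - m * (2 * 1)) / (2 * r) ^ 2) r :=
    (hasDerivAt_const r 1).add ((hasDerivAt_const r m).div ((hasDerivAt_id r).const_mul 2) h2r)
  have h : HasDerivAt (schwA m) _ r := ((hasDerivAt_pow 2 r).const_mul (4 * π)).mul (hu.pow 4)
  convert h using 1
  simp only [Nat.reduceSub]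
  field_simp
  ring

theorem schwA_deriv_pos {r : ℝ} (hm : 0 ≤ m) (hr : m / 2 < r) :
    0 < 8 * π * (1 + m / (2 * r)) ^ 3 * (r - m / 2) := by
  have : 0 < r := by linarith
  have : 0 < r - m / 2 := by linarith
  positivity

theorem schwA_strictMonoOn (hm : 0 < m) : StrictMonoOn (schwA m) (Ici (m / 2)) := by
  refine strictMonoOn_of_deriv_pos (convex_Ici _) (fun r hr => ?_) (fun r hr => ?_)
  · exact (hasDerivAt_schwA m ((half_pos hm).trans_le hr).ne').continuousAt.continuousWithinAt
  · rw [interior_Ici] at hr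
    rw [(hasDerivAt_schwA m ((half_pos hm).trans hr).ne').deriv]
    exact schwA_deriv_pos hm.le hr

theorem invFunOn_schwA {A : ℝ} (hm : 0 < m) (hA : 2 * m < areaRadius A) :
    Function.invFunOn (schwA m) (Ici (m / 2)) A = schwRadius m (areaRadius A) := by
  have hmem : schwRadius m (areaRadius A) ∈ Ici (m / 2) := (half_lt_schwRadius hA).le
  have hinv := schwA_schwRadius_areaRadius hm.le hA
  have hex : ∃ r ∈ Ici (m / 2), schwA m r = A := ⟨_, hmem, hinv⟩
  exact (schwA_strictMonoOn hm).injOn (Function.invFunOn_mem hex) hmem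
    ((Function.invFunOn_eq hex).trans hinv.symm)

theorem hasDerivAt_schwV {r : ℝ} (hm : 0 < m) (hr : m / 2 < r) :
    HasDerivAt (schwV m) (4 * π * r ^ 2 * (1 + m / (2 * r)) ^ 6) r := by
  have hcont : ContinuousOn (fun ρ : ℝ => 4 * π * ρ ^ 2 * (1 + m / (2 * ρ)) ^ 6) (Ioi 0) := by
    refine ContinuousOn.mul (by fun_prop) (ContinuousOn.pow (continuousOn_const.add ?_) 6)
    exact continuousOn_const.div (by fun_prop) fun x hx => (mul_pos two_pos hx).ne'
  have hr0 : 0 < r := (half_pos hm).trans hr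
  have hsub : uIcc (m / 2) r ⊆ Ioi 0 := by
    rw [uIcc_of_le hr.le]
    exact fun x hx => (half_pos hm).trans_le hx.1
  exact intervalIntegral.integral_hasDerivAt_right (hcont.mono hsub).intervalIntegrable
    (hcont.stronglyMeasurableAtFilter isOpen_Ioi r hr0) (hcont.continuousAt (Ioi_mem_nhds hr0))

/-- `φ_m'`, as a function of the area radius `s = √(A/4π)`. -/
noncomputable def schwSlope (m s : ℝ) : ℝ := √(s ^ 3 / (4 * (s - 2 * m)))

theorem schwV_deriv_mul_inv_schwA_deriv {r : ℝ} (hm : 0 ≤ m) (hr : m / 2 < r)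
    (hrs : (r + m / 2) ^ 2 = s * r) :
    4 * π * r ^ 2 * (1 + m / (2 * r)) ^ 6 * (8 * π * (1 + m / (2 * r)) ^ 3 * (r - m / 2))⁻¹ =
      schwSlope m s := by
  have hr0 : 0 < r := by linarith
  have hrm : 0 < r - m / 2 := by linarith
  have hsub : (r - m / 2) ^ 2 = r * (s - 2 * m) := by linear_combination hrs
  have hsm : 0 < s - 2 * m := pos_of_mul_pos_right (hsub ▸ pow_pos hrm 2) hr0.le
  have hs0 : 0 < s := by linarith
  calc _ = (r + m / 2) ^ 3 / (2 * r * (r - m / 2)) := by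
        field_simp
        ring
    _ = schwSlope m s := by
        rw [schwSlope, eq_comm, sqrt_eq_iff_eq_sq (by positivity) (by positivity), div_pow,
          show ((r + m / 2) ^ 3) ^ 2 = ((r + m / 2) ^ 2) ^ 3 by ring, mul_pow, mul_pow, hrs, hsub]
        field_simp
        ring

theorem hasDerivAt_schwPhi {A : ℝ} (hm : 0 < m) (hA : 2 * m < areaRadius A) :
    HasDerivAt (schwPhi m) (schwSlope m (areaRadius A)) A := by
  have hr := half_lt_schwRadius hA
  have hinv : HasDerivAt (fun B => schwRadius m (areaRadius B))
      (8 * π * (1 + m / (2 * schwRadius m (areaRadius A))) ^ 3 *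
        (schwRadius m (areaRadius A) - m / 2))⁻¹ A :=
    .of_local_left_inverse ((continuous_schwRadius m).comp continuous_areaRadius).continuousAt
      (hasDerivAt_schwA m ((half_pos hm).trans hr).ne') (schwA_deriv_pos hm.le hr).ne'
      ((eventually_lt_areaRadius hA).mono fun B hB => schwA_schwRadius_areaRadius hm.le hB)
  rw [← schwV_deriv_mul_inv_schwA_deriv hm.le hr (schwRadius_add_half_sq hm.le hA.le)]
  refine ((hasDerivAt_schwV hm hr).comp A hinv).congr_of_eventuallyEq ?_
  filter_upwards [eventually_lt_areaRadius hA] with B hB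
  rw [schwPhi, invFunOn_schwA hm hB]
  rfl

theorem schwSlope_pos (hm : 0 ≤ m) (hs : 2 * m < s) : 0 < schwSlope m s := by
  have : 0 < s - 2 * m := by linarith
  have : 0 < s := by linarith
  exact sqrt_pos.2 (by positivity)

theorem hasDerivAt_schwSlope (hm : 0 ≤ m) (hs : 2 * m < s) :
    HasDerivAt (schwSlope m) ((s - 3 * m) * (s ^ 2 / (4 * (s - 2 * m) ^ 2 * schwSlope m s))) s := by
  have hsm : s - 2 * m ≠ 0 := by linarith
  have hq : HasDerivAt (fun x => x ^ 3 / (4 * (x - 2 * m)))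
      (s ^ 2 * (s - 3 * m) / (2 * (s - 2 * m) ^ 2)) s := by
    refine ((hasDerivAt_pow 3 s).fun_div (((hasDerivAt_id' s).sub_const (2 * m)).const_mul 4)
      (by simpa using hsm)).congr_deriv ?_
    field_simp
    ring
  refine (hq.sqrt (sqrt_pos.1 (schwSlope_pos hm hs)).ne').congr_deriv ?_
  rw [← schwSlope]
  field_simp
  ring

theorem sign_deriv_deriv_schwPhi {A : ℝ} (hm : 0 < m) (hA : 2 * m < areaRadius A) :
    SignType.sign (deriv (deriv (schwPhi m)) A) = SignType.sign (areaRadius A - 3 * m) := by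
  have hA0 : 0 < A := ((lt_areaRadius_iff (by positivity)).1 hA).trans' (by positivity)
  have hslope : deriv (schwPhi m) =ᶠ[𝓝 A] schwSlope m ∘ areaRadius :=
    (eventually_lt_areaRadius hA).mono fun B hB => (hasDerivAt_schwPhi hm hB).deriv
  rw [hslope.deriv_eq, ((hasDerivAt_schwSlope hm.le hA).comp A (hasDerivAt_areaRadius hA0)).deriv]
  have := schwSlope_pos hm.le hA
  have : 0 < areaRadius A - 2 * m := by linarith
  have : 0 < areaRadius A := by linarith
  have hslope_factor :
      0 < areaRadius A ^ 2 / (4 * (areaRadius A - 2 * m) ^ 2 * schwSlope m (areaRadius A)) := by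
    positivity
  have hradius_factor : 0 < (8 * π * areaRadius A)⁻¹ := by positivity
  rw [sign_mul, sign_mul, sign_pos hslope_factor, sign_pos hradius_factor, mul_one, mul_one]

end Schwarzschild

/-- Sign of `φ_m″`: negative on `(16πm², 36πm²)`, zero at `36πm²`, and
positive on `(36πm², ∞)`. -/
theorem schwPhi_second_deriv_sign (m : ℝ) (hm : 0 < m) :
    (∀ A : ℝ, 16 * Real.pi * m ^ 2 < A → A < 36 * Real.pi * m ^ 2 →
      deriv (deriv (schwPhi m)) A < 0) ∧
    deriv (deriv (schwPhi m)) (36 * Real.pi * m ^ 2) = 0 ∧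
    (∀ A : ℝ, 36 * Real.pi * m ^ 2 < A → 0 < deriv (deriv (schwPhi m)) A) := by
  have hsign : ∀ A, 16 * Real.pi * m ^ 2 < A → SignType.sign (deriv (deriv (schwPhi m)) A) =
      SignType.sign (Schwarzschild.areaRadius A - 3 * m) := fun A hA =>
    Schwarzschild.sign_deriv_deriv_schwPhi hm
      ((Schwarzschild.lt_areaRadius_iff (by positivity)).2 (by linarith))
  have h36 : 36 * Real.pi * m ^ 2 = 4 * Real.pi * (3 * m) ^ 2 := by ring
  have h16 : 16 * Real.pi * m ^ 2 < 36 * Real.pi * m ^ 2 := by gcongr; norm_num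
  refine ⟨fun A hA hA' => ?_, ?_, fun A hA => ?_⟩
  · rw [← sign_eq_neg_one_iff, hsign A hA, sign_eq_neg_one_iff, sub_neg,
      Schwarzschild.areaRadius_lt_iff (by positivity), ← h36]
    exact hA'
  · rw [← sign_eq_zero_iff, hsign _ h16, sign_eq_zero_iff, sub_eq_zero, h36,
      Schwarzschild.areaRadius_four_pi_mul_sq (by positivity)]
  · rw [← sign_eq_one_iff, hsign A (h16.trans hA), sign_eq_one_iff, sub_pos,
      Schwarzschild.lt_areaRadius_iff (by positivity), ← h36]
    exact hA
end
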